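/- arXiv:2508.18847 — 2 statements merged into one kernel-verified Lean document; each statement's English description precedes it below -/
import Mathlib

section
/- Let N ≥ 1 be an integer, η ∈ [0,1], and let Y be a Bernoulli(η) random variable. For q in the probability simplex Δ^{N+1} define the risk R(q) := Σ_{i=0}^{N} q_i · E[(Y − i/N)²] = Σ_{i=0}^{N} q_i (η(1 − i/N)² + (1 − η)(i/N)²). Let k ∈ {0, …, N} be any index minimizing |η − i/N| over i ∈ {0, …, N}. Then the deterministic distribution e_k (with (e_k)_k = 1 and (e_k)_j = 0 for j ≠ k) minimizes R over Δ^{N+1}: for every q ∈ Δ^{N+1}, R(e_k) ≤ R(q). In other words, the tokenized Brier score is a proper scoring rule for verbalized confidence. -/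
/-!
A `{0,1}`-valued `Y` satisfies `Y² = Y`, so `E[(Y - c)²] = (η - c)² + η(1 - η)` with
`η = E[Y]`. The risk of a token `i` is therefore increasing in `|η - i/N|`, and the risk of a
mixture `q` is a convex combination of token risks, hence at least the smallest of them.
-/

open MeasureTheory

section ZeroOneValued

variable {Ω : Type*} [MeasurableSpace Ω] {μ : Measure Ω} {Y : Ω → ℝ}

omit [MeasurableSpace Ω] in
lemma eq_indicator_of_zero_or_one (hY01 : ∀ ω, Y ω = 0 ∨ Y ω = 1) :
    Y = {ω | Y ω = 1}.indicator (fun _ => (1 : ℝ)) := by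
  funext ω
  rcases hY01 ω with h | h <;> simp [Set.indicator, h]

lemma integral_eq_measureReal_of_zero_or_one (hY : Measurable Y)
    (hY01 : ∀ ω, Y ω = 0 ∨ Y ω = 1) :
    ∫ ω, Y ω ∂μ = μ.real {ω | Y ω = 1} :=
  calc ∫ ω, Y ω ∂μ = ∫ ω, {ω | Y ω = 1}.indicator (fun _ => (1 : ℝ)) ω ∂μ :=
        congrArg (fun Z : Ω → ℝ => ∫ ω, Z ω ∂μ) (eq_indicator_of_zero_or_one hY01)
    _ = μ.real {ω | Y ω = 1} := by
        rw [integral_indicator_const (1 : ℝ)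
          (show MeasurableSet {ω | Y ω = 1} from hY (measurableSet_singleton 1)), smul_eq_mul,
          mul_one]

lemma integrable_of_zero_or_one [IsFiniteMeasure μ] (hY : Measurable Y)
    (hY01 : ∀ ω, Y ω = 0 ∨ Y ω = 1) : Integrable Y μ := by
  rw [eq_indicator_of_zero_or_one hY01]
  exact (integrable_const 1).indicator (hY (measurableSet_singleton 1))

lemma integral_sub_sq_of_zero_or_one [IsProbabilityMeasure μ] (hY : Measurable Y)
    (hY01 : ∀ ω, Y ω = 0 ∨ Y ω = 1) (c : ℝ) :
    ∫ ω, (Y ω - c) ^ 2 ∂μ = (∫ ω, Y ω ∂μ - c) ^ 2 + (∫ ω, Y ω ∂μ) * (1 - ∫ ω, Y ω ∂μ) := by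
  have hlin : ∀ ω, (Y ω - c) ^ 2 = (1 - 2 * c) * Y ω + c ^ 2 := fun ω => by
    rcases hY01 ω with h | h <;> rw [h] <;> ring
  simp_rw [hlin]
  rw [integral_add ((integrable_of_zero_or_one hY hY01).const_mul _) (integrable_const _),
    integral_const_mul, integral_const, probReal_univ, one_smul]
  ring

end ZeroOneValued

lemma sum_ite_mul_le_sum_mul_of_forall_le {ι : Type*} [Fintype ι] [DecidableEq ι]
    {q f : ι → ℝ} {k : ι} (hq : ∀ i, 0 ≤ q i) (hq1 : ∑ i, q i = 1) (hk : ∀ i, f k ≤ f i) :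
    ∑ i, (if i = k then (1 : ℝ) else 0) * f i ≤ ∑ i, q i * f i :=
  calc ∑ i, (if i = k then (1 : ℝ) else 0) * f i = ∑ i, q i * f k := by
        simp only [ite_mul, one_mul, zero_mul, Finset.sum_ite_eq', Finset.mem_univ, if_true,
          ← Finset.sum_mul, hq1]
    _ ≤ ∑ i, q i * f i :=
      Finset.sum_le_sum fun i _ => mul_le_mul_of_nonneg_left (hk i) (hq i)

theorem tokenized_brier_proper_general
    {Ω : Type*} [MeasurableSpace Ω] (μ : Measure Ω) [IsProbabilityMeasure μ]
    (Y : Ω → ℝ) (hY : Measurable Y) (hY01 : ∀ ω, Y ω = 0 ∨ Y ω = 1)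
    (η : ℝ) (hη0 : 0 ≤ η)
    (hYη : μ {ω | Y ω = 1} = ENNReal.ofReal η)
    (N : ℕ)
    (k : Fin (N + 1))
    (hk : ∀ i : Fin (N + 1), |η - ((k : ℕ) : ℝ) / (N : ℝ)| ≤ |η - ((i : ℕ) : ℝ) / (N : ℝ)|) :
    ∀ q : Fin (N + 1) → ℝ, (∀ i, 0 ≤ q i) → (∑ i, q i) = 1 →
      (∑ i : Fin (N + 1), (if i = k then (1 : ℝ) else 0) *
          ∫ ω, (Y ω - ((i : ℕ) : ℝ) / (N : ℝ)) ^ 2 ∂μ)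
        ≤ ∑ i : Fin (N + 1), q i * ∫ ω, (Y ω - ((i : ℕ) : ℝ) / (N : ℝ)) ^ 2 ∂μ := by
  intro q hq hq1
  have hmean : ∫ ω, Y ω ∂μ = η := by
    rw [integral_eq_measureReal_of_zero_or_one hY hY01, measureReal_def, hYη,
      ENNReal.toReal_ofReal hη0]
  refine sum_ite_mul_le_sum_mul_of_forall_le hq hq1 fun i => ?_
  simp only [integral_sub_sq_of_zero_or_one hY hY01, hmean]
  exact add_le_add_left (sq_le_sq.mpr (hk i)) _

/-- The tokenized Brier score is a proper scoring rule for verbalized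
confidence: for `Y ~ Bernoulli(η)` and `R(q) := Σ_i q_i E[(Y - i/N)²]`, any index `k`
minimizing `|η - i/N|` gives a deterministic distribution `e_k` minimizing `R` over the
probability simplex. -/
theorem tokenized_brier_proper
    {Ω : Type*} [MeasurableSpace Ω] (μ : Measure Ω) [IsProbabilityMeasure μ]
    (Y : Ω → ℝ) (hY : Measurable Y) (hY01 : ∀ ω, Y ω = 0 ∨ Y ω = 1)
    (η : ℝ) (hη0 : 0 ≤ η) (hη1 : η ≤ 1)
    (hYη : μ {ω | Y ω = 1} = ENNReal.ofReal η)
    (N : ℕ) (hN : 1 ≤ N)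
    (k : Fin (N + 1))
    (hk : ∀ i : Fin (N + 1), |η - ((k : ℕ) : ℝ) / (N : ℝ)| ≤ |η - ((i : ℕ) : ℝ) / (N : ℝ)|) :
    ∀ q : Fin (N + 1) → ℝ, (∀ i, 0 ≤ q i) → (∑ i, q i) = 1 →
      (∑ i : Fin (N + 1), (if i = k then (1 : ℝ) else 0) *
          ∫ ω, (Y ω - ((i : ℕ) : ℝ) / (N : ℝ)) ^ 2 ∂μ)
        ≤ ∑ i : Fin (N + 1), q i * ∫ ω, (Y ω - ((i : ℕ) : ℝ) / (N : ℝ)) ^ 2 ∂μ :=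
  tokenized_brier_proper_general μ Y hY hY01 η hη0 hYη N k hk
end

section
/- Let N ≥ 1 be an integer, η ∈ [0,1], and let Y be a Bernoulli(η) random variable. For q ∈ Δ^{N+1} define R(q) := Σ_{i=0}^{N} q_i · E[(Y − i/N)²]. Suppose the index k ∈ {0, …, N} minimizing |η − i/N| is unique, i.e., |η − k/N| < |η − j/N| for every j ≠ k. Then the deterministic distribution e_k is the unique minimizer of R over Δ^{N+1}: R(e_k) < R(q) for every q ∈ Δ^{N+1} with q ≠ e_k. -/
open MeasureTheory

/-! Since `Y ∈ {0, 1}` we have `Y² = Y`, so `E[(Y - a)²] = (η - a)² + η (1 - η)`: the risk is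
linear in `q` with coefficients that are strictly increasing in `|η - i/N|`. A linear function on
the simplex whose coefficients have a unique smallest entry `c k` is uniquely minimized at the
vertex `e_k`, because any other `q` puts positive mass on some strictly larger coefficient. -/

theorem exists_ne_pos_of_mem_stdSimplex_of_ne {ι : Type*} [Fintype ι] [DecidableEq ι]
    {q : ι → ℝ} (hq : q ∈ stdSimplex ℝ ι) {k : ι}
    (hne : q ≠ fun j => if j = k then 1 else 0) : ∃ j ≠ k, 0 < q j := by
  by_contra! hle
  have hzero : ∀ j ≠ k, q j = 0 := fun j hj => (hle j hj).antisymm (hq.1 j)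
  have hk : q k = 1 := by
    rw [← hq.2, Finset.sum_eq_single k (fun j _ hj => hzero j hj) (by simp)]
  refine hne (funext fun j => ?_)
  by_cases hj : j = k
  · simp [hj, hk]
  · simp [hj, hzero j hj]

theorem lt_sum_mul_of_mem_stdSimplex_of_ne {ι : Type*} [Fintype ι] [DecidableEq ι]
    {c q : ι → ℝ} {k : ι} (hc : ∀ j ≠ k, c k < c j) (hq : q ∈ stdSimplex ℝ ι)
    (hne : q ≠ fun j => if j = k then 1 else 0) : c k < ∑ i, q i * c i := by
  obtain ⟨j, hjk, hqj⟩ := exists_ne_pos_of_mem_stdSimplex_of_ne hq hne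
  have hgap : 0 < ∑ i, q i * (c i - c k) := by
    refine Finset.sum_pos' (fun i _ => mul_nonneg (hq.1 i) ?_) ⟨j, Finset.mem_univ j, ?_⟩
    · by_cases hi : i = k
      · simp [hi]
      · exact sub_nonneg.mpr (hc i hi).le
    · exact mul_pos hqj (sub_pos.mpr (hc j hjk))
  have hsplit : ∑ i, q i * (c i - c k) = ∑ i, q i * c i - c k := by
    simp only [mul_sub, Finset.sum_sub_distrib, ← Finset.sum_mul, hq.2, one_mul]
  linarith

section Bernoulli

variable {Ω : Type*} [MeasurableSpace Ω] {μ : Measure Ω} {Y : Ω → ℝ} {η : ℝ}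

theorem integrable_and_integral_eq_of_bernoulli [IsFiniteMeasure μ] (hY : Measurable Y)
    (hY01 : ∀ ω, Y ω = 0 ∨ Y ω = 1) (hη0 : 0 ≤ η) (hYη : μ {ω | Y ω = 1} = ENNReal.ofReal η) :
    Integrable Y μ ∧ ∫ ω, Y ω ∂μ = η := by
  have hset : MeasurableSet {ω | Y ω = 1} := hY (measurableSet_singleton 1)
  have hind : Y = {ω | Y ω = 1}.indicator 1 := by
    funext ω
    rcases hY01 ω with h | h <;> simp [Set.indicator, h]
  rw [hind]
  refine ⟨(integrable_indicator_iff hset).mpr (integrableOn_const (measure_ne_top μ _)), ?_⟩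
  rw [integral_indicator_one hset, measureReal_def, hYη, ENNReal.toReal_ofReal hη0]

theorem integral_sub_sq_of_bernoulli [IsProbabilityMeasure μ] (hY : Measurable Y)
    (hY01 : ∀ ω, Y ω = 0 ∨ Y ω = 1) (hη0 : 0 ≤ η)
    (hYη : μ {ω | Y ω = 1} = ENNReal.ofReal η) (a : ℝ) :
    ∫ ω, (Y ω - a) ^ 2 ∂μ = (η - a) ^ 2 + η * (1 - η) := by
  obtain ⟨hint, hmean⟩ := integrable_and_integral_eq_of_bernoulli hY hY01 hη0 hYη
  have hlin : ∀ ω, (Y ω - a) ^ 2 = (1 - 2 * a) * Y ω + a ^ 2 := fun ω => by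
    rcases hY01 ω with h | h <;> rw [h] <;> ring
  simp only [hlin]
  rw [integral_add (hint.const_mul _) (integrable_const _), integral_const_mul, integral_const,
    hmean, probReal_univ, one_smul]
  ring

end Bernoulli

theorem tokenized_brier_unique_minimizer_general
    {Ω : Type*} [MeasurableSpace Ω] (μ : Measure Ω) [IsProbabilityMeasure μ]
    (Y : Ω → ℝ) (hY : Measurable Y) (hY01 : ∀ ω, Y ω = 0 ∨ Y ω = 1)
    (η : ℝ) (hη0 : 0 ≤ η)
    (hYη : μ {ω | Y ω = 1} = ENNReal.ofReal η)
    (N : ℕ)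
    (k : Fin (N + 1))
    (hk : ∀ j : Fin (N + 1), j ≠ k →
      |η - ((k : ℕ) : ℝ) / (N : ℝ)| < |η - ((j : ℕ) : ℝ) / (N : ℝ)|) :
    ∀ q : Fin (N + 1) → ℝ, (∀ i, 0 ≤ q i) → (∑ i, q i) = 1 →
      q ≠ (fun j : Fin (N + 1) => if j = k then (1 : ℝ) else 0) →
      (∑ i : Fin (N + 1), (if i = k then (1 : ℝ) else 0) *
          ∫ ω, (Y ω - ((i : ℕ) : ℝ) / (N : ℝ)) ^ 2 ∂μ)
        < ∑ i : Fin (N + 1), q i * ∫ ω, (Y ω - ((i : ℕ) : ℝ) / (N : ℝ)) ^ 2 ∂μ := by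
  intro q hq0 hq1 hne
  simp only [integral_sub_sq_of_bernoulli hY hY01 hη0 hYη, ite_mul, one_mul, zero_mul,
    Finset.sum_ite_eq', Finset.mem_univ, if_true]
  refine lt_sum_mul_of_mem_stdSimplex_of_ne
    (c := fun i : Fin (N + 1) => (η - ((i : ℕ) : ℝ) / N) ^ 2 + η * (1 - η))
    (fun j hj => ?_) ⟨hq0, hq1⟩ hne
  exact add_lt_add_left (sq_lt_sq.mpr (hk j hj)) _

/-- For `Y ~ Bernoulli(η)` and `R(q) := Σ_i q_i E[(Y - i/N)²]`, if the
index `k` minimizing `|η - i/N|` is unique, then the deterministic distribution `e_k`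
is the unique minimizer of `R` over the probability simplex. -/
theorem tokenized_brier_unique_minimizer
    {Ω : Type*} [MeasurableSpace Ω] (μ : Measure Ω) [IsProbabilityMeasure μ]
    (Y : Ω → ℝ) (hY : Measurable Y) (hY01 : ∀ ω, Y ω = 0 ∨ Y ω = 1)
    (η : ℝ) (hη0 : 0 ≤ η) (hη1 : η ≤ 1)
    (hYη : μ {ω | Y ω = 1} = ENNReal.ofReal η)
    (N : ℕ) (hN : 1 ≤ N)
    (k : Fin (N + 1))
    (hk : ∀ j : Fin (N + 1), j ≠ k →
      |η - ((k : ℕ) : ℝ) / (N : ℝ)| < |η - ((j : ℕ) : ℝ) / (N : ℝ)|) :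
    ∀ q : Fin (N + 1) → ℝ, (∀ i, 0 ≤ q i) → (∑ i, q i) = 1 →
      q ≠ (fun j : Fin (N + 1) => if j = k then (1 : ℝ) else 0) →
      (∑ i : Fin (N + 1), (if i = k then (1 : ℝ) else 0) *
          ∫ ω, (Y ω - ((i : ℕ) : ℝ) / (N : ℝ)) ^ 2 ∂μ)
        < ∑ i : Fin (N + 1), q i * ∫ ω, (Y ω - ((i : ℕ) : ℝ) / (N : ℝ)) ^ 2 ∂μ :=
  tokenized_brier_unique_minimizer_general μ Y hY hY01 η hη0 hYη N k hk
end
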